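/- Let k(x) ∈ ℝ[[x]] be invertible with nonzero coefficient of x, let μ ∈ ℝ*, set h(x) = μ·(1/k(x))', and define P_K(f) = k·∫₀ˣ(h·f) on ℝ[[x]] (termwise integration). Then for all n ≥ 0, P_K^n(1) = μⁿ·(k(x)/k(0))·Σ_{s≥n} ln^s(k(0)/k(x))/s!, where ln(k(0)/k(x)) denotes the formal power series logarithm (which has lowest degree term of degree 1); in particular P_K^n(1) ∈ xⁿℝ[[x]] \ xⁿ⁺¹ℝ[[x]]. -/

import Mathlib

/-!
Write `L = ln(k(0)/k)` and `Tₙ = Σ_{s≥n} Lˢ/s!`. Since `L' = -k'/k = k·(1/k)'`, we have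
`h·k = μ·L'`, so `P_K(c·k·Tₙ) = cμ·k·∫(L'·Tₙ) = cμ·k·Tₙ₊₁`, because `Tₙ₊₁' = L'·Tₙ` and
`Tₙ₊₁(0) = 0`. The iteration starts from `1 = k·T₀/k(0)`, as `T₀ = exp L = k(0)/k`: both sides
solve `y' = L'·y` with `y(0) = 1`. Finally `Tₙ` has order exactly `n`, its leading coefficient
being `L₁ⁿ/n!` with `L₁ = -k₁/k₀ ≠ 0`, and multiplying by the unit `k` does not change the order.
-/

open PowerSeries

/-- Termwise integration on `ℝ⟦X⟧`. -/
noncomputable def integ (f : ℝ⟦X⟧) : ℝ⟦X⟧ :=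
  PowerSeries.mk fun n => if n = 0 then 0 else (PowerSeries.coeff (n - 1) f) / n

/-- The formal logarithm of a power series `g` (with constant term `1`):
the antiderivative of `g'/g` vanishing at `0`. -/
noncomputable def lnSeries (g : ℝ⟦X⟧) : ℝ⟦X⟧ := integ (derivativeFun g * g⁻¹)

/-- The tail `Σ_{s≥n} L^s/s!` of the exponential series of `L` (of positive order),
defined coefficientwise. -/
noncomputable def tailExp (L : ℝ⟦X⟧) (n : ℕ) : ℝ⟦X⟧ :=
  PowerSeries.mk fun m => ∑ s ∈ Finset.Icc n m, PowerSeries.coeff m (L ^ s) / s.factorial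

/-- `P_K(f) = k·∫₀ˣ(h·f)`. -/
noncomputable def PK (k h f : ℝ⟦X⟧) : ℝ⟦X⟧ := k * integ (h * f)

@[simp]
lemma constantCoeff_integ (f : ℝ⟦X⟧) : constantCoeff (integ f) = 0 := by
  simp [integ, ← coeff_zero_eq_constantCoeff_apply]

@[simp]
lemma derivative_integ (f : ℝ⟦X⟧) : d⁄dX ℝ (integ f) = f := by
  ext n
  have : (n + 1 : ℝ) ≠ 0 := by positivity
  simp only [coeff_derivative, integ, coeff_mk, Nat.add_one_ne_zero, if_false,
    Nat.add_sub_cancel, Nat.cast_add, Nat.cast_one]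
  field_simp

lemma integ_smul (c : ℝ) (f : ℝ⟦X⟧) : integ (c • f) = c • integ f := by
  ext n
  simp only [integ, coeff_mk, coeff_smul, smul_eq_mul]
  split_ifs <;> ring

lemma eq_integ_of_derivative_eq {f g : ℝ⟦X⟧} (hd : d⁄dX ℝ f = g) (h0 : constantCoeff f = 0) :
    f = integ g :=
  derivative.ext (by rw [hd, derivative_integ]) (by rw [h0, constantCoeff_integ])

lemma constantCoeff_derivative {R : Type*} [CommSemiring R] (f : R⟦X⟧) :
    constantCoeff (d⁄dX R f) = coeff 1 f := by
  simpa using coeff_derivative f 0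

lemma derivative_inv_mul_self {K : Type*} [Field K] {k : K⟦X⟧} (hk : constantCoeff k ≠ 0) :
    d⁄dX K k⁻¹ * k = -(d⁄dX K k * k⁻¹) := by
  rw [derivative_inv']
  linear_combination (-(k⁻¹ * d⁄dX K k)) * PowerSeries.mul_inv_cancel k hk

lemma coeff_pow_self_of_constantCoeff_eq_zero {R : Type*} [CommSemiring R] {L : R⟦X⟧}
    (hL : constantCoeff L = 0) (n : ℕ) : coeff n (L ^ n) = coeff 1 L ^ n := by
  obtain ⟨M, rfl⟩ := X_dvd_iff.mpr hL
  rw [mul_pow, coeff_X_pow_mul', if_pos le_rfl, Nat.sub_self, coeff_zero_eq_constantCoeff,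
    map_pow, coeff_succ_X_mul, coeff_zero_eq_constantCoeff]

lemma X_pow_dvd_and_not_dvd_of_order_eq {R : Type*} [Semiring R] {φ : R⟦X⟧} {n : ℕ}
    (h : φ.order = n) : X ^ n ∣ φ ∧ ¬ X ^ (n + 1) ∣ φ := by
  rw [pow_dvd_iff_le_emultiplicity, pow_dvd_iff_le_emultiplicity, ← order_eq_emultiplicity_X, h]
  exact ⟨le_rfl, by norm_cast; omega⟩

lemma order_smul_mul_of_constantCoeff_ne_zero {K : Type*} [Field K] {c : K} (hc : c ≠ 0)
    {k : K⟦X⟧} (hk : constantCoeff k ≠ 0) (f : K⟦X⟧) : (c • (k * f)).order = f.order := by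
  have hunit : IsUnit (C c * k) := isUnit_iff_constantCoeff.mpr (by simp [hc, hk])
  rw [smul_eq_C_mul, ← mul_assoc, order_mul, order_zero_of_unit hunit, zero_add]

section TailExp

variable {L : ℝ⟦X⟧}

noncomputable def partialExp (L : ℝ⟦X⟧) (n N : ℕ) : ℝ⟦X⟧ :=
  ∑ s ∈ Finset.Icc n N, (s.factorial : ℝ)⁻¹ • L ^ s

lemma coeff_tailExp_of_lt (L : ℝ⟦X⟧) {n m : ℕ} (h : m < n) : coeff m (tailExp L n) = 0 := by
  rw [tailExp, coeff_mk, Finset.Icc_eq_empty (by omega), Finset.sum_empty]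

lemma coeff_tailExp_self (L : ℝ⟦X⟧) (n : ℕ) :
    coeff n (tailExp L n) = coeff n (L ^ n) / n.factorial := by
  rw [tailExp, coeff_mk, Finset.Icc_self, Finset.sum_singleton]

lemma tailExp_zero_eq_one_add (L : ℝ⟦X⟧) : tailExp L 0 = 1 + tailExp L 1 := by
  ext m
  rw [map_add, tailExp, tailExp, coeff_mk, coeff_mk,
    ← Finset.insert_Icc_add_one_left_eq_Icc (Nat.zero_le m), Finset.sum_insert (by simp)]
  simp [coeff_one]

/-- Only the terms `s ≤ m` of `Σ L^s/s!` contribute to the coefficient of `X^m`. -/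
lemma coeff_tailExp_eq_coeff_partialExp (hL : constantCoeff L = 0) (n : ℕ) {m N : ℕ}
    (h : m ≤ N) : coeff m (tailExp L n) = coeff m (partialExp L n N) := by
  rw [tailExp, coeff_mk, partialExp, map_sum,
    Finset.sum_subset (Finset.Icc_subset_Icc_right h)]
  · refine Finset.sum_congr rfl fun s _ => ?_
    rw [coeff_smul, smul_eq_mul, div_eq_inv_mul]
  · intro s hs hns
    have hms : (m : ℕ∞) < s := Nat.cast_lt.mpr (by simp only [Finset.mem_Icc] at hs hns; omega)
    rw [coeff_of_lt_order m (hms.trans_le (le_order_pow_of_constantCoeff_eq_zero s hL)), zero_div]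

lemma derivative_partialExp_succ (L : ℝ⟦X⟧) (n N : ℕ) :
    d⁄dX ℝ (partialExp L (n + 1) (N + 1)) = d⁄dX ℝ L * partialExp L n N := by
  rw [partialExp, ← Finset.map_add_right_Icc n N 1, Finset.sum_map, map_sum, partialExp,
    Finset.mul_sum]
  refine Finset.sum_congr rfl fun s _ => ?_
  have : ((s + 1).factorial : ℝ)⁻¹ * (s + 1 : ℕ) = (s.factorial : ℝ)⁻¹ := by
    rw [Nat.factorial_succ]; push_cast; field_simp
  simp only [addRightEmbedding_apply, Derivation.map_smul, derivative_pow, Nat.add_sub_cancel]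
  rw [← this, mul_smul, mul_smul_comm, mul_smul_comm, Nat.cast_smul_eq_nsmul, nsmul_eq_mul,
    mul_comm (d⁄dX ℝ L), mul_assoc]

lemma derivative_tailExp_succ (hL : constantCoeff L = 0) (n : ℕ) :
    d⁄dX ℝ (tailExp L (n + 1)) = d⁄dX ℝ L * tailExp L n := by
  ext m
  rw [coeff_derivative, coeff_tailExp_eq_coeff_partialExp hL (n + 1) le_rfl,
    ← coeff_derivative, derivative_partialExp_succ, coeff_mul, coeff_mul]
  refine Finset.sum_congr rfl fun p hp => ?_
  rw [coeff_tailExp_eq_coeff_partialExp hL n (Finset.HasAntidiagonal.antidiagonal.snd_le hp)]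

lemma derivative_tailExp_zero (hL : constantCoeff L = 0) :
    d⁄dX ℝ (tailExp L 0) = d⁄dX ℝ L * tailExp L 0 := by
  rw [tailExp_zero_eq_one_add, map_add, Derivation.map_one_eq_zero, zero_add,
    derivative_tailExp_succ hL, ← tailExp_zero_eq_one_add]

lemma constantCoeff_tailExp_zero (L : ℝ⟦X⟧) : constantCoeff (tailExp L 0) = 1 := by
  rw [tailExp_zero_eq_one_add, map_add, map_one, ← coeff_zero_eq_constantCoeff_apply,
    coeff_tailExp_of_lt L zero_lt_one, add_zero]

lemma tailExp_succ_eq_integ (hL : constantCoeff L = 0) (n : ℕ) :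
    tailExp L (n + 1) = integ (d⁄dX ℝ L * tailExp L n) :=
  eq_integ_of_derivative_eq (derivative_tailExp_succ hL n)
    (by rw [← coeff_zero_eq_constantCoeff_apply, coeff_tailExp_of_lt L n.succ_pos])

lemma order_tailExp (hL : constantCoeff L = 0) (hL1 : coeff 1 L ≠ 0) (n : ℕ) :
    (tailExp L n).order = n := by
  refine order_eq_nat.mpr ⟨?_, fun i hi => coeff_tailExp_of_lt L hi⟩
  rw [coeff_tailExp_self, coeff_pow_self_of_constantCoeff_eq_zero hL]
  exact div_ne_zero (pow_ne_zero n hL1) (Nat.cast_ne_zero.mpr n.factorial_ne_zero)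

end TailExp

lemma constantCoeff_lnSeries (g : ℝ⟦X⟧) : constantCoeff (lnSeries g) = 0 :=
  constantCoeff_integ _

lemma derivative_lnSeries (g : ℝ⟦X⟧) : d⁄dX ℝ (lnSeries g) = d⁄dX ℝ g * g⁻¹ :=
  derivative_integ _

lemma tailExp_lnSeries_zero {g : ℝ⟦X⟧} (hg : constantCoeff g = 1) :
    tailExp (lnSeries g) 0 = g := by
  have hE : d⁄dX ℝ (tailExp (lnSeries g) 0) = d⁄dX ℝ g * g⁻¹ * tailExp (lnSeries g) 0 := by
    rw [derivative_tailExp_zero (constantCoeff_lnSeries g), derivative_lnSeries]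
  set E := tailExp (lnSeries g) 0
  -- `E / g` has derivative `E' / g - E g' / g² = 0`, since `E' = (g' / g) E`.
  have hquot : E * g⁻¹ = 1 := by
    refine derivative.ext ?_ (by simp [E, constantCoeff_tailExp_zero, hg])
    rw [Derivation.leibniz, derivative_inv', hE, Derivation.map_one_eq_zero, smul_eq_mul,
      smul_eq_mul]
    ring
  calc E = E * g⁻¹ * g := by
        rw [mul_assoc, PowerSeries.inv_mul_cancel g (by simp [hg]), mul_one]
    _ = g := by rw [hquot, one_mul]

lemma derivative_lnSeries_C_mul_inv {c : ℝ} (hc : c ≠ 0) {k : ℝ⟦X⟧}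
    (hk : constantCoeff k ≠ 0) :
    d⁄dX ℝ (lnSeries (C c * k⁻¹)) = -(d⁄dX ℝ k * k⁻¹) := by
  have hg : C c * k⁻¹ * (C c * k⁻¹)⁻¹ = 1 :=
    PowerSeries.mul_inv_cancel _ (by simp [hc, hk])
  have hdg : d⁄dX ℝ (C c * k⁻¹) = -(d⁄dX ℝ k * k⁻¹) * (C c * k⁻¹) := by
    rw [Derivation.leibniz, derivative_inv', derivative_C, smul_zero, add_zero, smul_eq_mul]
    ring
  rw [derivative_lnSeries, hdg, mul_assoc, hg, mul_one]

section PK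

variable {k h L : ℝ⟦X⟧}

lemma PK_smul_mul_tailExp (hL : constantCoeff L = 0) {μ : ℝ} (hhk : h * k = μ • d⁄dX ℝ L)
    (c : ℝ) (n : ℕ) :
    PK k h (c • (k * tailExp L n)) = (c * μ) • (k * tailExp L (n + 1)) := by
  have hintegrand : h * (c • (k * tailExp L n)) = (c * μ) • (d⁄dX ℝ L * tailExp L n) := by
    rw [mul_smul_comm, ← mul_assoc, hhk, smul_mul_assoc, smul_smul]
  rw [PK, hintegrand, integ_smul, ← tailExp_succ_eq_integ hL, mul_smul_comm]

lemma iterate_PK_smul_mul_tailExp (hL : constantCoeff L = 0) {μ : ℝ}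
    (hhk : h * k = μ • d⁄dX ℝ L) (c : ℝ) (n : ℕ) :
    (PK k h)^[n] (c • (k * tailExp L 0)) = (c * μ ^ n) • (k * tailExp L n) := by
  induction n with
  | zero => simp
  | succ n ih =>
    rw [Function.iterate_succ_apply', ih, PK_smul_mul_tailExp hL hhk, mul_assoc, pow_succ]

end PK

/-- For `k` invertible with nonzero linear coefficient, `μ ≠ 0` and `h = μ·(1/k)'`,
one has `P_K^n(1) = μⁿ·(k/k(0))·Σ_{s≥n} lnˢ(k(0)/k)/s!`, and
`P_K^n(1) ∈ xⁿℝ[[x]] \ xⁿ⁺¹ℝ[[x]]`. -/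
theorem stmt19 (k : ℝ⟦X⟧) (hk0 : constantCoeff k ≠ 0)
    (hk1 : PowerSeries.coeff 1 k ≠ 0) (μ : ℝ) (hμ : μ ≠ 0)
    (h : ℝ⟦X⟧) (hh : h = μ • derivativeFun (k⁻¹)) :
    ∀ n : ℕ,
      (PK k h)^[n] 1 =
        (μ ^ n / constantCoeff k) •
          (k * tailExp (lnSeries (PowerSeries.C (constantCoeff k) * k⁻¹)) n) ∧
      (X : ℝ⟦X⟧) ^ n ∣ (PK k h)^[n] 1 ∧ ¬ (X : ℝ⟦X⟧) ^ (n + 1) ∣ (PK k h)^[n] 1 := by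
  set k0 := constantCoeff k
  set L := lnSeries (C k0 * k⁻¹)
  have hL0 : constantCoeff L = 0 := constantCoeff_lnSeries _
  have hL' : d⁄dX ℝ L = -(d⁄dX ℝ k * k⁻¹) := derivative_lnSeries_C_mul_inv hk0 hk0
  have hL1 : coeff 1 L ≠ 0 := by
    rw [← constantCoeff_derivative, hL', map_neg, map_mul, constantCoeff_derivative,
      constantCoeff_inv]
    exact neg_ne_zero.mpr (mul_ne_zero hk1 (inv_ne_zero hk0))
  have hhk : h * k = μ • d⁄dX ℝ L := by
    rw [hh, hL', smul_mul_assoc]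
    exact congrArg (μ • ·) (derivative_inv_mul_self hk0)
  have hone : (1 : ℝ⟦X⟧) = k0⁻¹ • (k * tailExp L 0) := by
    rw [tailExp_lnSeries_zero (by simp [k0, hk0]), mul_left_comm,
      PowerSeries.mul_inv_cancel k hk0, mul_one, smul_eq_C_mul, ← map_mul, inv_mul_cancel₀ hk0,
      map_one]
  have hformula (n : ℕ) : (PK k h)^[n] 1 = (μ ^ n / k0) • (k * tailExp L n) := by
    rw [hone, iterate_PK_smul_mul_tailExp hL0 hhk, inv_mul_eq_div]
  intro n
  rw [hformula n]
  refine ⟨rfl, X_pow_dvd_and_not_dvd_of_order_eq ?_⟩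
  rw [order_smul_mul_of_constantCoeff_ne_zero (div_ne_zero (pow_ne_zero n hμ) hk0) hk0,
    order_tailExp hL0 hL1]
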